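/- Any two consecutive words of the list L_n have Hamming distance exactly 1, i.e., they differ in exactly one position. -/

import Mathlib

/-!
Inside a block `L_n^i` the words are `l_i^{n-1}` followed by the distinct digits of one shifted
production, so neighbours differ only in the last position. The digit carried from block to block
alternates between `2` and `3` (`s(k,2)` ends in `3` and `s(k,3)` ends in `2`), and both productions
start with the carried digit. Hence the last word of `L_n^i` and the first word of `L_n^{i+1}` end
in the same digit, and they differ exactly where `l_i^{n-1}` and `l_{i+1}^{n-1}` do.
-/

def lastD (w : List Nat) : Nat := w.getLastD 0

/-- Shifted production for the Catalan rule: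
`sC k 2 = [2, k+1, k, ..., 3]` and, for `3 ≤ i ≤ k+1`,
`sC k i = [i, i+1, ..., k+1, 2, 3, ..., i-1]`. -/
def sC (k i : Nat) : List Nat :=
  if i = 2 then 2 :: (List.range (k - 1)).map (fun t => k + 1 - t)
  else (List.range (k + 2 - i)).map (fun t => i + t) ++
       (List.range (i - 2)).map (fun t => 2 + t)

/-- Builds the sublists `L_n^i` from the previous level, carrying the
starting digit of the next shifted production. -/
def graySubsAux : Nat → List (List Nat) → List (List (List Nat))
  | _, [] => []
  | j, w :: ws =>
    let sub := (sC (lastD w) j).map (fun d => w ++ [d])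
    sub :: graySubsAux (lastD (sub.getLastD [])) ws

def graySubs (prev : List (List Nat)) : List (List (List Nat)) :=
  graySubsAux 2 prev

/-- The Gray code list `L_n` for the Catalan succession rule. -/
def grayL : Nat → List (List Nat)
  | 0 => []
  | 1 => [[2]]
  | n + 2 => (graySubs (grayL (n + 1))).flatten

/-- Hamming distance: number of positions where two words differ. -/
def hamming {α : Type*} [DecidableEq α] (v w : List α) : Nat :=
  ((v.zip w).filter (fun p => decide (p.1 ≠ p.2))).length

section Hamming

variable {α : Type*} [DecidableEq α]

lemma hamming_self (v : List α) : hamming v v = 0 := by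
  induction v with
  | nil => rfl
  | cons a l ih => simpa [hamming, List.zip_cons_cons] using ih

lemma hamming_append_singleton {v w : List α} (h : v.length = w.length) (a b : α) :
    hamming (v ++ [a]) (w ++ [b]) = hamming v w + if a = b then 0 else 1 := by
  unfold hamming
  rw [List.zip_append h, List.filter_append, List.length_append]
  by_cases hab : a = b <;> simp [hab]

lemma isChain_map_append_singleton (w : List α) {l : List α} (hl : l.Nodup) :
    (l.map (w ++ [·])).IsChain (fun u v => hamming u v = 1) := by
  refine List.isChain_map _ |>.2 <| hl.isChain.imp fun a b hab => ?_
  simp [hamming_append_singleton rfl, hamming_self, hab]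

end Hamming

lemma sC_ne_nil (k i : ℕ) : sC k i ≠ [] := by
  unfold sC
  split_ifs <;> simp
  omega

lemma sC_nodup (k i : ℕ) : (sC k i).Nodup := by
  unfold sC
  split_ifs
  · refine List.nodup_cons.2 ⟨?_, List.nodup_range.map_on ?_⟩
    · simp only [List.mem_map, List.mem_range, not_exists, not_and]
      omega
    · simp only [List.mem_range]
      omega
  · refine List.Nodup.append (List.nodup_range.map_on ?_) (List.nodup_range.map_on ?_) ?_
    · simp
    · simp
    · simp only [List.disjoint_left, List.mem_map, List.mem_range]
      omega

lemma two_le_of_mem_sC {k i d : ℕ} (hi : 2 ≤ i) (hd : d ∈ sC k i) : 2 ≤ d := by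
  unfold sC at hd
  split_ifs at hd <;> simp at hd <;> omega

lemma getLastD_mem_sC (k i : ℕ) : (sC k i).getLastD 0 ∈ sC k i := by
  rw [List.getLastD_eq_getLast?, List.getLast?_eq_some_getLast (sC_ne_nil k i)]
  exact List.getLast_mem _

lemma sC_head? {k i : ℕ} (hik : i ≤ k + 1) : (sC k i).head? = some i := by
  unfold sC
  split_ifs with hi
  · simp [hi]
  · obtain ⟨m, hm⟩ : ∃ m, k + 2 - i = m + 1 := ⟨k + 1 - i, by omega⟩
    simp [hm, List.range_succ_eq_map]

lemma sC_two_getLastD {k : ℕ} (hk : 2 ≤ k) : (sC k 2).getLastD 0 = 3 := by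
  obtain ⟨m, rfl⟩ : ∃ m, k = m + 2 := ⟨k - 2, by omega⟩
  rw [sC, if_pos rfl, show m + 2 - 1 = m + 1 by omega, List.range_succ, List.map_append,
    List.map_singleton, ← List.cons_append, List.getLastD_concat]
  omega

lemma sC_getLastD {k i : ℕ} (hi : 3 ≤ i) : (sC k i).getLastD 0 = i - 1 := by
  obtain ⟨m, rfl⟩ : ∃ m, i = m + 3 := ⟨i - 3, by omega⟩
  simp [sC, List.range_succ, List.getLastD_eq_getLast?]
  omega

lemma sC_getLastD_eq_two_or_three {k j : ℕ} (hk : 2 ≤ k) (hj : j = 2 ∨ j = 3) :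
    (sC k j).getLastD 0 = 2 ∨ (sC k j).getLastD 0 = 3 := by
  rcases hj with rfl | rfl
  · exact Or.inr (sC_two_getLastD hk)
  · exact Or.inl (sC_getLastD le_rfl)

lemma lastD_getLastD_map_append (w l : List ℕ) :
    lastD ((l.map (w ++ [·])).getLastD []) = l.getLastD 0 := by
  rcases l.eq_nil_or_concat with rfl | ⟨l, d, rfl⟩ <;> simp [lastD]

lemma graySubsAux_cons (j : ℕ) (w : List ℕ) (ws : List (List ℕ)) :
    graySubsAux j (w :: ws) =
      (sC (lastD w) j).map (w ++ [·]) :: graySubsAux ((sC (lastD w) j).getLastD 0) ws := by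
  rw [graySubsAux, lastD_getLastD_map_append]

lemma exists_of_mem_flatten_graySubsAux {prev : List (List ℕ)} {j : ℕ} (hj : 2 ≤ j)
    {u : List ℕ} (hu : u ∈ (graySubsAux j prev).flatten) :
    ∃ w ∈ prev, ∃ d, 2 ≤ d ∧ u = w ++ [d] := by
  induction prev generalizing j with
  | nil => simp [graySubsAux] at hu
  | cons w ws ih =>
    rw [graySubsAux_cons, List.flatten_cons, List.mem_append] at hu
    rcases hu with hu | hu
    · obtain ⟨d, hd, rfl⟩ := List.mem_map.1 hu
      exact ⟨w, List.mem_cons_self, d, two_le_of_mem_sC hj hd, rfl⟩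
    · obtain ⟨v, hv, d, hd, rfl⟩ := ih (two_le_of_mem_sC hj (getLastD_mem_sC _ _)) hu
      exact ⟨v, List.mem_cons_of_mem _ hv, d, hd, rfl⟩

lemma head?_flatten_graySubsAux_cons {j : ℕ} {w : List ℕ} (ws : List (List ℕ))
    (hj : j ≤ lastD w + 1) : (graySubsAux j (w :: ws)).flatten.head? = some (w ++ [j]) := by
  rw [graySubsAux_cons, List.flatten_cons, List.head?_append, List.head?_map, sC_head? hj]
  rfl

lemma getLast?_map_append_sC (w : List ℕ) (j : ℕ) :
    ((sC (lastD w) j).map (w ++ [·])).getLast? = some (w ++ [(sC (lastD w) j).getLastD 0]) := by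
  rw [List.getLast?_map, List.getLastD_eq_getLast?,
    List.getLast?_eq_some_getLast (sC_ne_nil _ _)]
  rfl

lemma isChain_flatten_graySubsAux {m : ℕ} {prev : List (List ℕ)} {j : ℕ} (hj : j = 2 ∨ j = 3)
    (hlen : ∀ w ∈ prev, w.length = m) (hlast : ∀ w ∈ prev, 2 ≤ lastD w)
    (hprev : prev.IsChain (fun v w => hamming v w = 1)) :
    (graySubsAux j prev).flatten.IsChain (fun v w => hamming v w = 1) := by
  induction prev generalizing j with
  | nil => simp [graySubsAux]
  | cons w ws ih =>
    have hw := hlast w List.mem_cons_self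
    rw [graySubsAux_cons, List.flatten_cons]
    refine (isChain_map_append_singleton w (sC_nodup _ _)).append
      (ih (sC_getLastD_eq_two_or_three hw hj) (fun v hv => hlen v (List.mem_cons_of_mem _ hv))
        (fun v hv => hlast v (List.mem_cons_of_mem _ hv)) hprev.tail) ?_
    rcases ws with _ | ⟨w₁, ws⟩
    · simp [graySubsAux]
    · have hw₁ := hlast w₁ (by simp)
      rw [getLast?_map_append_sC, head?_flatten_graySubsAux_cons ws
        (by rcases sC_getLastD_eq_two_or_three hw hj with h | h <;> omega)]
      rintro _ ⟨⟩ _ ⟨⟩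
      rw [hamming_append_singleton (by rw [hlen w (by simp), hlen w₁ (by simp)]), if_pos rfl]
      exact (List.isChain_cons_cons.1 hprev).1

lemma length_of_mem_grayL : ∀ {n : ℕ} {w : List ℕ}, w ∈ grayL n → w.length = n
  | 1, w, hw => by simp_all [grayL]
  | n + 2, w, hw => by
    obtain ⟨v, hv, d, -, rfl⟩ := exists_of_mem_flatten_graySubsAux le_rfl hw
    simp [length_of_mem_grayL hv]

lemma two_le_lastD_of_mem_grayL {n : ℕ} {w : List ℕ} (hw : w ∈ grayL n) : 2 ≤ lastD w := by
  match n, hw with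
  | 1, hw => simp_all [grayL, lastD]
  | n + 2, hw =>
    obtain ⟨v, -, d, hd, rfl⟩ := exists_of_mem_flatten_graySubsAux le_rfl hw
    simpa [lastD] using hd

lemma isChain_grayL : ∀ n : ℕ, (grayL n).IsChain (fun v w => hamming v w = 1)
  | 0 => .nil
  | 1 => .singleton _
  | n + 2 => isChain_flatten_graySubsAux (Or.inl rfl) (fun _ => length_of_mem_grayL)
      (fun _ => two_le_lastD_of_mem_grayL) (isChain_grayL (n + 1))

theorem stmt5_general (n : Nat) (i : Nat) (hi : i + 1 < (grayL n).length) :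
    hamming ((grayL n).getD i []) ((grayL n).getD (i + 1) []) = 1 := by
  rw [List.getD_eq_getElem _ _ (by omega), List.getD_eq_getElem _ _ hi]
  exact List.isChain_iff_getElem.1 (isChain_grayL n) i hi

/-- Any two consecutive words of `L_n` have Hamming distance exactly 1. -/
theorem stmt5 (n : Nat) (hn : 1 ≤ n) (i : Nat) (hi : i + 1 < (grayL n).length) :
    hamming ((grayL n).getD i []) ((grayL n).getD (i + 1) []) = 1 :=
  stmt5_general n i hi
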